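/- Let G be a group, I a left-translation-invariant ideal of subsets of G, and X ⊆ G. If g ∈ Stab_I(X) = { h : hX △ X ∈ I } and X ∉ I, then gX ∩ X ≠ ∅; consequently Stab_I(X) ⊆ X X⁻¹ whenever X ∉ I. -/
import Mathlib

open Pointwise

theorem stmt_12 {G : Type*} [Group G] (I : Set (Set G))
    (hsub : ∀ A B : Set G, A ⊆ B → B ∈ I → A ∈ I)
    (hunion : ∀ A B : Set G, A ∈ I → B ∈ I → A ∪ B ∈ I)
    (hinv : ∀ (g : G) (A : Set G), A ∈ I → g • A ∈ I)
    (X : Set G) (hX : X ∉ I) :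
    (∀ g : G, symmDiff (g • X) X ∈ I → ((g • X) ∩ X).Nonempty) ∧
      {g : G | symmDiff (g • X) X ∈ I} ⊆ X * X⁻¹ := by
  have key : ∀ g : G, symmDiff (g • X) X ∈ I → ((g • X) ∩ X).Nonempty := by
    intro g hg
    by_contra h
    rw [Set.not_nonempty_iff_eq_empty] at h
    apply hX
    apply hsub X (symmDiff (g • X) X) _ hg
    intro x hx
    rw [symmDiff_def]
    right
    constructor
    · exact hx
    · intro hx'
      have : x ∈ (g • X) ∩ X := ⟨hx', hx⟩
      rw [h] at this
      exact this
  refine ⟨key, fun g hg => ?_⟩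
  obtain ⟨x, hx1, hx2⟩ := key g hg
  obtain ⟨y, hy, rfl⟩ := hx1
  exact ⟨g • y, hx2, y⁻¹, Set.inv_mem_inv.mpr hy, by simp [smul_eq_mul]⟩
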